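/- Let φ : G × X → X be a continuous cocompactly expansive action of a group G on a topological space X, and let H ≤ G be a syndetic subgroup, i.e. there exists a finite set F ⊆ G with G = FH. Then the restricted action of H on X is cocompactly expansive. -/
import Mathlib


/-- Cocompact expansiveness. -/
def CocompactlyExpansive {G X : Type*} [TopologicalSpace X] (φ : G → X → X) : Prop :=
  ∃ (𝒰 : Finset (Set X)) (K : Set X),
    (∀ U ∈ 𝒰, IsOpen U) ∧ (∀ x : X, ∃ U ∈ 𝒰, x ∈ U) ∧
    IsCompact K ∧ (∀ x : X, ∃ g : G, ∃ k ∈ K, x = φ g k) ∧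
    (∀ x y : X, (∀ g : G, (∃ U ∈ 𝒰, φ g x ∈ U ∧ φ g y ∈ U) ∨ (φ g x ∉ K ∧ φ g y ∉ K)) →
      x = y)

/-- If a continuous action of a group `G` on a topological space `X` is cocompactly
expansive and `H ≤ G` is a syndetic subgroup (i.e. `G = F ⬝ H` for some finite
`F ⊆ G`), then the restricted action of `H` on `X` is cocompactly expansive. -/
theorem cocompactlyExpansive_syndetic_subgroup {G X : Type*} [Group G] [TopologicalSpace X]
    (φ : G → X → X) (hone : ∀ x : X, φ 1 x = x)
    (hmul : ∀ (g h : G) (x : X), φ (g * h) x = φ g (φ h x))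
    (hcont : ∀ g : G, Continuous (φ g))
    (H : Subgroup G) (F : Finset G)
    (hsynd : ∀ g : G, ∃ f ∈ F, ∃ h ∈ H, g = f * h)
    (hce : CocompactlyExpansive φ) :
    CocompactlyExpansive (fun (h : H) (x : X) => φ (h : G) x) := by
  classical
  obtain ⟨𝒰, K, hUopen, hUcov, hKcomp, hKsurj, hexp⟩ := hce
  -- inverse property
  have hinv : ∀ (g : G) (x : X), φ g⁻¹ (φ g x) = x := by
    intro g x
    rw [← hmul, inv_mul_cancel, hone]
  -- new cover
  set V : (∀ f ∈ F, Set X) → Set X :=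
    fun p => ⋂ f : {a // a ∈ F}, φ (f : G) ⁻¹' p f f.2 with hV
  set 𝒱 : Finset (Set X) := (F.pi (fun _ => 𝒰)).image V with h𝒱
  -- new compact set
  set K' : Set X := ⋃ f ∈ F, φ f⁻¹ '' K with hK'
  have hK'mem : ∀ (f : G), f ∈ F → ∀ x : X, φ f x ∈ K → x ∈ K' := by
    intro f hf x hx
    rw [hK']
    refine Set.mem_biUnion hf ⟨φ f x, hx, ?_⟩
    exact hinv f x
  refine ⟨𝒱, K', ?_, ?_, ?_, ?_, ?_⟩
  · -- open
    intro U hU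
    rw [h𝒱] at hU
    obtain ⟨p, hp, rfl⟩ := Finset.mem_image.mp hU
    exact isOpen_iInter_of_finite fun f =>
      (hUopen _ (Finset.mem_pi.mp hp f f.2)).preimage (hcont _)
  · -- cover
    intro x
    choose u hu1 hu2 using fun f : G => hUcov (φ f x)
    refine ⟨V (fun f _ => u f), ?_, ?_⟩
    · exact Finset.mem_image.mpr ⟨fun f _ => u f, Finset.mem_pi.mpr fun f _ => hu1 f, rfl⟩
    · exact Set.mem_iInter.mpr fun f => hu2 f
  · -- compact
    exact (F.finite_toSet).isCompact_biUnion fun f _ => (hKcomp.image (hcont f⁻¹))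
  · -- surjective
    intro x
    obtain ⟨g, k, hk, hx⟩ := hKsurj x
    obtain ⟨f, hf, h, hh, hg⟩ := hsynd g⁻¹
    have hxK : φ h x ∈ K' := by
      apply hK'mem f hf
      rw [← hmul, ← hg]
      rw [hx, hinv]
      exact hk
    exact ⟨⟨h⁻¹, H.inv_mem hh⟩, φ h x, hxK, (hinv h x).symm⟩
  · -- expansive
    intro x y hxy
    apply hexp x y
    intro g
    obtain ⟨f, hf, h, hh, rfl⟩ := hsynd g
    rcases hxy ⟨h, hh⟩ with ⟨U, hU, hxU, hyU⟩ | ⟨hxK, hyK⟩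
    · left
      rw [h𝒱] at hU
      obtain ⟨p, hp, rfl⟩ := Finset.mem_image.mp hU
      refine ⟨p f hf, Finset.mem_pi.mp hp f hf, ?_, ?_⟩
      · have := Set.mem_iInter.mp hxU ⟨f, hf⟩
        rwa [hmul]
      · have := Set.mem_iInter.mp hyU ⟨f, hf⟩
        rwa [hmul]
    · right
      constructor
      · intro hc
        exact hxK (hK'mem f hf _ (by rwa [← hmul]))
      · intro hc
        exact hyK (hK'mem f hf _ (by rwa [← hmul]))
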